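/- arXiv:2308.16432 — 12 statements merged into one kernel-verified Lean document; each statement's English description precedes it below -/
import Mathlib

section
/- Let ω, ω' ≥ 1 and n ≥ 1 be integers, let A_0,…,A_{n−1}, B_0,…,B_{n−1} be natural numbers with A_i, B_i < 2^ω, and let t_0,…,t_{n−1}, p_0,…,p_{n−1} be natural numbers with t_i, p_i < 2^{ω'}. Define carry sequences by c_0 = 0, c_{i+1} = ⌊(A_i + B_i + c_i)/2^ω⌋ and c'_0 = 0, c'_{i+1} = ⌊(t_i + p_i + c'_i)/2^{ω'}⌋. Suppose that for every i with 0 ≤ i ≤ n−1 the two limb additions fall into the same case, i.e., (A_i + B_i < 2^ω − 1 if and only if t_i + p_i < 2^{ω'} − 1) and (A_i + B_i = 2^ω − 1 if and only if t_i + p_i = 2^{ω'} − 1). Then c_i = c'_i for every i with 0 ≤ i ≤ n. -/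
lemma limb_carry (ω x y cc : ℕ) (hω : 1 ≤ ω) (hx : x < 2 ^ ω) (hy : y < 2 ^ ω)
    (hcc : cc ≤ 1) :
    (x + y + cc) / 2 ^ ω =
      if x + y < 2 ^ ω - 1 then 0 else if x + y = 2 ^ ω - 1 then cc else 1 := by
  have h2 : 2 ≤ 2 ^ ω := by
    calc 2 = 2 ^ 1 := rfl
    _ ≤ 2 ^ ω := Nat.pow_le_pow_right (by norm_num) hω
  split_ifs with h1 h2'
  · exact Nat.div_eq_of_lt (by omega)
  · interval_cases cc
    · exact Nat.div_eq_of_lt (by omega)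
    · have : x + y + 1 = 2 ^ ω := by omega
      rw [this, Nat.div_self (by omega)]
  · exact Nat.div_eq_of_lt_le (by omega) (by omega)

/-- If each pair of limb additions falls into the same case
(N/P/G), then the two carry sequences coincide. -/
theorem carry_sequences_eq (ω ω' n : ℕ) (hω : 1 ≤ ω) (hω' : 1 ≤ ω') (hn : 1 ≤ n)
    (A B t p : ℕ → ℕ)
    (hA : ∀ i, i ≤ n - 1 → A i < 2 ^ ω) (hB : ∀ i, i ≤ n - 1 → B i < 2 ^ ω)
    (ht : ∀ i, i ≤ n - 1 → t i < 2 ^ ω') (hp : ∀ i, i ≤ n - 1 → p i < 2 ^ ω')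
    (c c' : ℕ → ℕ) (hc0 : c 0 = 0) (hc'0 : c' 0 = 0)
    (hc : ∀ i, i ≤ n - 1 → c (i + 1) = (A i + B i + c i) / 2 ^ ω)
    (hc' : ∀ i, i ≤ n - 1 → c' (i + 1) = (t i + p i + c' i) / 2 ^ ω')
    (hcase : ∀ i, i ≤ n - 1 →
      (A i + B i < 2 ^ ω - 1 ↔ t i + p i < 2 ^ ω' - 1) ∧
      (A i + B i = 2 ^ ω - 1 ↔ t i + p i = 2 ^ ω' - 1)) :
    ∀ i, i ≤ n → c i = c' i := by
  have key : ∀ i, i ≤ n → c i = c' i ∧ c i ≤ 1 := by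
    intro i
    induction i with
    | zero => intro _; simp [hc0, hc'0]
    | succ k ih =>
      intro hk
      have hk' : k ≤ n - 1 := by omega
      obtain ⟨heq, hle⟩ := ih (by omega)
      have hle' : c' k ≤ 1 := heq ▸ hle
      rw [hc k hk', hc' k hk',
        limb_carry ω _ _ _ hω (hA k hk') (hB k hk') hle,
        limb_carry ω' _ _ _ hω' (ht k hk') (hp k hk') hle']
      obtain ⟨h1, h2⟩ := hcase k hk'
      constructor
      · split_ifs with a b a' b' <;> simp_all <;> omega
      · split_ifs <;> omega
  intro i hi
  exact (key i hi).1
end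

section
/- Let A and B be natural numbers with A < 2^64 and B < 2^64. Let D = (A + B) mod 2^64, let m = 1 if D < A and m = 0 otherwise, let G be the number of 1s in the binary representation of D (so G ≤ 64), and let t = G + 65·m. Then: t < 64 if and only if A + B < 2^64 − 1 (case N); t = 64 if and only if A + B = 2^64 − 1 (case P); and t > 64 if and only if A + B ≥ 2^64 (case G). -/
/-!
Without a carry, `D = A + B < 2^64` and `m = 0`, so `t` is the popcount of a number below
`2^64`: at most `64`, with equality exactly for `2^64 - 1`, whose digits are all ones.
With a carry, `D = A + B - 2^64 < A` because `B < 2^64`, so `m = 1` and `t ≥ 65`.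
-/

namespace Nat

theorem ofDigits_replicate_pred (b k : ℕ) :
    ofDigits b (List.replicate k (b - 1)) = b ^ k - 1 := by
  induction k with
  | zero => simp
  | succ k ih =>
    rw [List.replicate_succ, ofDigits_cons, ih]
    rcases b with _ | b
    · simp
    · obtain ⟨x, hx⟩ : ∃ x, (b + 1) ^ k = x + 1 := ⟨_, (Nat.succ_pred_eq_of_pos (by positivity)).symm⟩
      rw [pow_succ, hx]
      simp only [Nat.add_sub_cancel]
      ring_nf
      omega

theorem digits_base_pow_sub_one {b : ℕ} (hb : 1 < b) (k : ℕ) :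
    digits b (b ^ k - 1) = List.replicate k (b - 1) := by
  rw [← ofDigits_replicate_pred]
  refine digits_ofDigits b hb _ (fun d hd => ?_) (fun _ => ?_)
  · rw [List.eq_of_mem_replicate hd]
    omega
  · rw [List.getLast_replicate]
    omega

variable {b k n : ℕ}

theorem count_pred_digits_le (hb : 1 < b) (hn : n < b ^ k) :
    (digits b n).count (b - 1) ≤ k :=
  List.count_le_length.trans ((digits_length_le_iff hb n).2 hn)

theorem count_pred_digits_eq_iff (hb : 1 < b) (hn : n < b ^ k) :
    (digits b n).count (b - 1) = k ↔ n = b ^ k - 1 := by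
  constructor
  · intro h
    have hlen := (digits_length_le_iff hb n).2 hn
    have hcount := List.count_le_length (a := b - 1) (l := digits b n)
    have hrep : digits b n = List.replicate k (b - 1) :=
      List.eq_replicate_iff.2 ⟨by omega, fun d hd => (List.count_eq_length.1 (by omega) d hd).symm⟩
    rw [← ofDigits_digits b n, hrep, ofDigits_replicate_pred]
  · rintro rfl
    simp [digits_base_pow_sub_one hb]

theorem add_mod_lt_left_iff {a c N : ℕ} (hc : c < N) : (a + c) % N < a ↔ N ≤ a + c := by
  by_cases h : N ≤ a + c
  · have : (a + c) % N ≤ a + c - N := by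
      rw [Nat.mod_eq_sub_mod h]
      exact Nat.mod_le _ _
    omega
  · rw [Nat.mod_eq_of_lt (by omega)]
    omega

end Nat

theorem native_radix_operand_classifies_case_general (A B : ℕ)
    (hB : B < 2 ^ 64)
    (D m G t : ℕ)
    (hD : D = (A + B) % 2 ^ 64)
    (hm : m = if D < A then 1 else 0)
    (hG : G = (Nat.digits 2 D).count 1)
    (ht : t = G + 65 * m) :
    (t < 64 ↔ A + B < 2 ^ 64 - 1) ∧
    (t = 64 ↔ A + B = 2 ^ 64 - 1) ∧
    (t > 64 ↔ 2 ^ 64 ≤ A + B) := by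
  have hcarry : D < A ↔ 2 ^ 64 ≤ A + B := hD ▸ Nat.add_mod_lt_left_iff hB
  by_cases hc : 2 ^ 64 ≤ A + B
  · have hm1 : m = 1 := by rw [hm, if_pos (hcarry.2 hc)]
    omega
  · have hDAB : D = A + B := by rw [hD, Nat.mod_eq_of_lt (by omega)]
    have hm0 : m = 0 := by rw [hm, if_neg (mt hcarry.1 hc)]
    have hDlt : D < 2 ^ 64 := by omega
    have hGle : G ≤ 64 := hG ▸ Nat.count_pred_digits_le one_lt_two hDlt
    have hGeq : G = 64 ↔ D = 2 ^ 64 - 1 := hG ▸ Nat.count_pred_digits_eq_iff one_lt_two hDlt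
    omega

/-- The native-radix (2^64) operand `t = popcount(D) + 65·m`
classifies the case (N/P/G) of the 64-bit addition of `A` and `B`. -/
theorem native_radix_operand_classifies_case (A B : ℕ)
    (hA : A < 2 ^ 64) (hB : B < 2 ^ 64)
    (D m G t : ℕ)
    (hD : D = (A + B) % 2 ^ 64)
    (hm : m = if D < A then 1 else 0)
    (hG : G = (Nat.digits 2 D).count 1)
    (ht : t = G + 65 * m) :
    (t < 64 ↔ A + B < 2 ^ 64 - 1) ∧
    (t = 64 ↔ A + B = 2 ^ 64 - 1) ∧
    (t > 64 ↔ 2 ^ 64 ≤ A + B) :=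
  native_radix_operand_classifies_case_general A B hB D m G t hD hm hG ht
end

section
/- Let k be an integer with 1 ≤ k ≤ 63 and let A, B be natural numbers with A < 2^k and B < 2^k, and set D = A + B (so D < 2^{k+1}). Let G = min(D + 2^64 − 2^k − 1, 2^64 − 1) (saturating 64-bit addition) and let t = max(G − (2^64 − 3), 0) (saturating subtraction, i.e., truncated subtraction on natural numbers). Then: t = 0 if and only if A + B < 2^k − 1 (case N); t = 1 if and only if A + B = 2^k − 1 (case P); and t = 2 if and only if A + B ≥ 2^k (case G). Consequently, with p = 254 we have t + p < 255 in case N, t + p = 255 in case P, and t + p ≥ 256 in case G, so the 8-bit addition of t and p falls into the same case as the radix-2^k addition of A and B. -/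
/-- For a reduced radix-2^k limb addition on SVE, the value
`t = SSUB(SADD(D, 2^64 - 2^k - 1), 2^64 - 3)` classifies the case (N/P/G),
and with `p = 254` the 8-bit addition of `t` and `p` falls into the same
case as the radix-2^k addition of `A` and `B`. -/
theorem sve_reduced_radix_operand_classifies_case (k A B : ℕ)
    (hk1 : 1 ≤ k) (hk2 : k ≤ 63)
    (hA : A < 2 ^ k) (hB : B < 2 ^ k)
    (D G t : ℕ)
    (hD : D = A + B)
    (hG : G = min (D + 2 ^ 64 - 2 ^ k - 1) (2 ^ 64 - 1))
    (ht : t = max (G - (2 ^ 64 - 3)) 0) :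
    ((t = 0 ↔ A + B < 2 ^ k - 1) ∧
     (t = 1 ↔ A + B = 2 ^ k - 1) ∧
     (t = 2 ↔ 2 ^ k ≤ A + B)) ∧
    ((A + B < 2 ^ k - 1 → t + 254 < 255) ∧
     (A + B = 2 ^ k - 1 → t + 254 = 255) ∧
     (2 ^ k ≤ A + B → 256 ≤ t + 254)) := by
  have h1 : 2 ≤ 2 ^ k := by
    calc 2 = 2 ^ 1 := rfl
    _ ≤ 2 ^ k := Nat.pow_le_pow_right (by norm_num) hk1
  have h2 : 2 ^ k ≤ 2 ^ 63 := Nat.pow_le_pow_right (by norm_num) hk2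
  have h63 : (2:ℕ) ^ 63 = 9223372036854775808 := by norm_num
  have h64 : (2:ℕ) ^ 64 = 18446744073709551616 := by norm_num
  rw [h63] at h2
  rw [h64] at hG ht
  omega
end

section
/- Let p be an odd natural number with p > 1, let ω ≥ 1, and set r = 2^ω. Let r⁻¹ be a natural number with r·r⁻¹ ≡ 1 (mod p), and let p' = (r·r⁻¹ − 1)/p (which is a natural number since p divides r·r⁻¹ − 1). Then for every natural number T, setting Q = (T·p') mod r, the number T + Q·p is divisible by r. -/
/-- In a Montgomery partial reduction step, `T + Q·p` is
divisible by the radix `r`, where `Q = (T·p') mod r`. -/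
theorem montgomery_step_divisible (p ω : ℕ) (hp_odd : Odd p) (hp : 1 < p)
    (hω : 1 ≤ ω) (r : ℕ) (hr : r = 2 ^ ω)
    (rinv : ℕ) (hrinv : r * rinv ≡ 1 [MOD p])
    (p' : ℕ) (hp' : p' = (r * rinv - 1) / p)
    (T : ℕ) :
    r ∣ T + ((T * p') % r) * p := by
  have hpos : 1 ≤ r * rinv := by
    rcases Nat.eq_zero_or_pos (r * rinv) with h | h
    · exfalso
      have := hrinv
      unfold Nat.ModEq at this
      rw [h] at this
      simp [Nat.mod_eq_of_lt hp] at this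
    · exact h
  have hdvd : p ∣ r * rinv - 1 := (Nat.modEq_iff_dvd' hpos).mp hrinv.symm
  have hpp' : p' * p = r * rinv - 1 := by
    rw [hp']; exact Nat.div_mul_cancel hdvd
  have h2 : T + (T * p' % r) * p ≡ T + T * p' * p [MOD r] :=
    Nat.ModEq.add_left _ ((Nat.mod_modEq (T * p') r).mul_right p)
  have h3 : T + T * p' * p = T * (r * rinv) := by
    rw [mul_assoc, hpp', Nat.mul_sub, mul_one]
    have hle : T ≤ T * (r * rinv) := Nat.le_mul_of_pos_right T hpos
    omega
  have h4 : r ∣ T + T * p' * p := by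
    rw [h3]; exact ⟨T * rinv, by ring⟩
  exact (Nat.modEq_zero_iff_dvd.mp ((h2.trans (Nat.modEq_zero_iff_dvd.mpr h4))))
end

section
/- Let p be an odd natural number with p > 1, let ω ≥ 1 and n ≥ 1, set r = 2^ω and R = 2^{ωn}, let r⁻¹ be a natural number with r·r⁻¹ ≡ 1 (mod p), and let p' = (r·r⁻¹ − 1)/p. Let T be a natural number with T < p·R, and define the sequence T^{(0)} = T and T^{(i)} = (T^{(i−1)} + ((T^{(i−1)}·p') mod r)·p)/r for 1 ≤ i ≤ n. Then T^{(n)} < 2p and R·T^{(n)} ≡ T (mod p); consequently, the value obtained from T^{(n)} by one conditional subtraction of p (i.e., T^{(n)} mod p) is the unique natural number y < p with R·y ≡ T (mod p). -/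
/-- Correctness of the generic word-by-word Montgomery
reduction: after `n` partial reduction steps, `T⁽ⁿ⁾ < 2p`,
`R·T⁽ⁿ⁾ ≡ T (mod p)`, and the value after one conditional subtraction of
`p` (i.e. `T⁽ⁿ⁾ mod p`) is the unique `y < p` with `R·y ≡ T (mod p)`. -/
theorem generic_montgomery_reduction_correct (p ω n : ℕ)
    (hp_odd : Odd p) (hp : 1 < p) (hω : 1 ≤ ω) (hn : 1 ≤ n)
    (r R : ℕ) (hr : r = 2 ^ ω) (hR : R = 2 ^ (ω * n))
    (rinv : ℕ) (hrinv : r * rinv ≡ 1 [MOD p])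
    (p' : ℕ) (hp' : p' = (r * rinv - 1) / p)
    (T : ℕ) (hT : T < p * R)
    (Ts : ℕ → ℕ) (hTs0 : Ts 0 = T)
    (hTs : ∀ i, i < n → Ts (i + 1) = (Ts i + ((Ts i * p') % r) * p) / r) :
    Ts n < 2 * p ∧ R * Ts n ≡ T [MOD p] ∧
      (Ts n % p < p ∧ R * (Ts n % p) ≡ T [MOD p] ∧
        ∀ y, y < p → R * y ≡ T [MOD p] → y = Ts n % p) := by
  have hp0 : 0 < p := by omega
  have hr0 : 0 < r := by rw [hr]; positivity
  have hrinv0 : 0 < rinv := by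
    rcases Nat.eq_zero_or_pos rinv with h | h
    · exfalso
      have : 0 % p = 1 % p := by simpa [h, Nat.ModEq] using hrinv
      simp [Nat.mod_eq_of_lt hp] at this
    · exact h
  have hrr1 : 1 ≤ r * rinv := Nat.one_le_iff_ne_zero.mpr (by positivity)
  have hpdvd : p ∣ r * rinv - 1 := (Nat.modEq_iff_dvd' hrr1).mp hrinv.symm
  have hpp' : p * p' = r * rinv - 1 := by
    rw [hp']; exact Nat.mul_div_cancel' hpdvd
  have key : 1 + p * p' = r * rinv := by omega
  -- divisibility of the numerator at each step
  have hdvd : ∀ i, r ∣ Ts i + ((Ts i * p') % r) * p := by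
    intro i
    have h1 : Ts i + ((Ts i * p') % r) * p ≡ 0 [MOD r] := by
      calc Ts i + ((Ts i * p') % r) * p
          ≡ Ts i + (Ts i * p') * p [MOD r] :=
            Nat.ModEq.add_left _ (((Ts i * p').mod_modEq r).mul_right p)
        _ = Ts i * (r * rinv) := by rw [← key]; ring
        _ ≡ 0 [MOD r] := (Nat.modEq_zero_iff_dvd).mpr ⟨Ts i * rinv, by ring⟩
    exact (Nat.modEq_zero_iff_dvd).mp h1
  -- bound invariant
  have hbound : ∀ i, i ≤ n → Ts i < p * 2 ^ (ω * (n - i)) + p := by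
    intro i
    induction i with
    | zero =>
      intro _
      rw [hTs0, Nat.sub_zero, ← hR]
      omega
    | succ i ih =>
      intro hin
      have hi : i < n := by omega
      have hprev := ih (le_of_lt hi)
      rw [hTs i hi]
      have hmod : (Ts i * p') % r ≤ r - 1 := by
        have := Nat.mod_lt (Ts i * p') hr0; omega
      have hnum : Ts i + ((Ts i * p') % r) * p < p * 2 ^ (ω * (n - i)) + r * p := by
        have : ((Ts i * p') % r) * p ≤ (r - 1) * p := Nat.mul_le_mul_right p hmod
        have hrp : (r - 1) * p + p = r * p := by
          cases r with
          | zero => omega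
          | succ k => simp [Nat.succ_sub_one]; ring
        omega
      have hsplit : ω * (n - i) = ω + ω * (n - (i + 1)) := by
        have : n - i = 1 + (n - (i + 1)) := by omega
        rw [this, Nat.mul_add, Nat.mul_one]
      have hbd_eq : p * 2 ^ (ω * (n - i)) + r * p
          = r * (p * 2 ^ (ω * (n - (i + 1))) + p) := by
        rw [hsplit, pow_add, hr]; ring
      have hdvd' : r ∣ p * 2 ^ (ω * (n - i)) + r * p := ⟨_, hbd_eq⟩
      have := Nat.div_lt_div_of_lt_of_dvd hdvd' hnum
      rwa [hbd_eq, Nat.mul_div_cancel_left _ hr0] at this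
  -- congruence invariant
  have hcong : ∀ i, i ≤ n → 2 ^ (ω * i) * Ts i ≡ T [MOD p] := by
    intro i
    induction i with
    | zero => intro _; simpa [hTs0] using Nat.ModEq.refl T
    | succ i ih =>
      intro hin
      have hi : i < n := by omega
      have hprev := ih (le_of_lt hi)
      have hrec : r * Ts (i + 1) = Ts i + ((Ts i * p') % r) * p := by
        rw [hTs i hi, Nat.mul_div_cancel' (hdvd i)]
      calc 2 ^ (ω * (i + 1)) * Ts (i + 1)
          = 2 ^ (ω * i) * (r * Ts (i + 1)) := by
            rw [hr, Nat.mul_add, Nat.mul_one, pow_add]; ring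
        _ = 2 ^ (ω * i) * (Ts i + ((Ts i * p') % r) * p) := by rw [hrec]
        _ ≡ 2 ^ (ω * i) * (Ts i + 0) [MOD p] := by
            exact Nat.ModEq.mul_left _ (Nat.ModEq.add_left _
              ((Nat.modEq_zero_iff_dvd).mpr (dvd_mul_left p _)))
        _ = 2 ^ (ω * i) * Ts i := by ring
        _ ≡ T [MOD p] := hprev
  have h1 : Ts n < 2 * p := by
    have := hbound n le_rfl
    simp at this
    omega
  have h2 : R * Ts n ≡ T [MOD p] := by
    rw [hR]; exact hcong n le_rfl
  have h3 : R * (Ts n % p) ≡ T [MOD p] :=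
    ((Nat.mod_modEq (Ts n) p).mul_left R).trans h2
  refine ⟨h1, h2, Nat.mod_lt _ hp0, h3, ?_⟩
  intro y hy hy2
  have hco : Nat.Coprime R p := by
    rw [hR]
    exact Nat.Coprime.pow_left _ ((Nat.coprime_two_left).mpr hp_odd)
  have : y ≡ Ts n % p [MOD p] :=
    (hy2.trans h3.symm).cancel_left_of_coprime hco.symm
  rw [Nat.ModEq] at this
  rwa [Nat.mod_eq_of_lt hy, Nat.mod_mod_of_dvd _ dvd_rfl] at this
end

section
/- Let p be an odd natural number with p > 1, let ω ≥ 1 and n > 2, set r = 2^ω, and let T be a natural number. For 1 ≤ i ≤ n−2, let T_i = ⌊T/r^{i−1}⌋ mod r be the i-th least significant radix-r digit of T, and let M_i be a natural number satisfying r^{n−i−1}·M_i ≡ 1 (mod p) (i.e., M_i ≡ r^{−n+i+1} (mod p)). Define T^{(n−2)} = ⌊T/r^{n−2}⌋ + Σ_{i=1}^{n−2} T_i·M_i. Then r^{n−2}·T^{(n−2)} ≡ T (mod p); equivalently, T·r^{−n} ≡ T^{(n−2)}·r^{−2} (mod p), i.e., REDC(T) ≡ T^{(n−2)}·r^{−2}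 (mod p). -/
open Finset in
lemma digit_decomp (r T : ℕ) : ∀ k, T % r ^ k = ∑ i ∈ Icc 1 k, (T / r ^ (i - 1) % r) * r ^ (i - 1) := by
  intro k
  induction k with
  | zero => simp [Nat.mod_one]
  | succ k ih =>
    rw [Finset.sum_Icc_succ_top (by omega), ← ih, Nat.mod_pow_succ]
    simp [mul_comm]

open Finset in
/-- The precomputation step of the proposed generic SIMD
Montgomery reduction: with `M_i ≡ r^(−n+i+1) (mod p)` and
`T⁽ⁿ⁻²⁾ = ⌊T/r^(n−2)⌋ + Σ_{i=1}^{n−2} T_i·M_i`, one has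
`r^(n−2)·T⁽ⁿ⁻²⁾ ≡ T (mod p)`, i.e. `REDC(T) ≡ T⁽ⁿ⁻²⁾·r⁻² (mod p)`. -/
theorem proposed_generic_redc_precomputation (p ω n : ℕ)
    (hp_odd : Odd p) (hp : 1 < p) (hω : 1 ≤ ω) (hn : 2 < n)
    (r : ℕ) (hr : r = 2 ^ ω)
    (T : ℕ) (Ti : ℕ → ℕ) (hTi : ∀ i, 1 ≤ i → i ≤ n - 2 → Ti i = T / r ^ (i - 1) % r)
    (M : ℕ → ℕ) (hM : ∀ i, 1 ≤ i → i ≤ n - 2 → r ^ (n - i - 1) * M i ≡ 1 [MOD p])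
    (T' : ℕ) (hT' : T' = T / r ^ (n - 2) + ∑ i ∈ Icc 1 (n - 2), Ti i * M i) :
    r ^ (n - 2) * T' ≡ T [MOD p] := by
  rw [← ZMod.natCast_eq_natCast_iff]
  have hdec : T = r ^ (n - 2) * (T / r ^ (n - 2)) + ∑ i ∈ Icc 1 (n - 2), (T / r ^ (i - 1) % r) * r ^ (i - 1) := by
    rw [← digit_decomp]
    exact (Nat.div_add_mod T (r ^ (n - 2))).symm
  subst hT'
  push_cast
  rw [mul_add]
  conv_rhs => rw [hdec]
  push_cast
  congr 1
  rw [Finset.mul_sum]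
  apply Finset.sum_congr rfl
  intro i hi
  simp only [Finset.mem_Icc] at hi
  rw [hTi i hi.1 hi.2]
  have hM' : ((r : ZMod p) ^ (n - i - 1) * (M i : ZMod p)) = 1 := by
    have := hM i hi.1 hi.2
    rw [← ZMod.natCast_eq_natCast_iff] at this
    push_cast at this
    simpa using this
  have hexp : n - 2 = (i - 1) + (n - i - 1) := by omega
  push_cast
  rw [hexp, pow_add]
  calc (r : ZMod p) ^ (i-1) * (r:ZMod p) ^ (n-i-1) * (↑(T / r ^ (i - 1) % r) * (M i : ZMod p))
      = ↑(T / r ^ (i - 1) % r) * (r:ZMod p) ^ (i-1) * ((r:ZMod p) ^ (n-i-1) * (M i : ZMod p)) := by ring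
    _ = ↑(T / r ^ (i - 1) % r) * (r:ZMod p) ^ (i-1) := by rw [hM', mul_one]
end

section
/- Let p be an odd natural number with p > 1, let ω ≥ 1 and n > 2, set r = 2^ω and R = 2^{ωn}, let r⁻¹ satisfy r·r⁻¹ ≡ 1 (mod p), and let p' = (r·r⁻¹ − 1)/p. Let T be a natural number, let T_i = ⌊T/r^{i−1}⌋ mod r for 1 ≤ i ≤ n−2, let M_i be natural numbers with r^{n−i−1}·M_i ≡ 1 (mod p), and define T^{(n−2)} = ⌊T/r^{n−2}⌋ + Σ_{i=1}^{n−2} T_i·M_i, followed by two partial reduction steps T^{(n−1)} = (T^{(n−2)} + ((T^{(n−2)}·p') mod r)·p)/r and T^{(n)} = (T^{(n−1)} + ((T^{(n−1)}·p') mod r)·p)/r. Then R·T^{(n)} ≡ T (mod p), i.e., T^{(n)} ≡ REDC(T) (mod p). -/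
open Finset

private lemma digitSum (r T : ℕ) : ∀ m, T % r ^ m = ∑ i ∈ Finset.range m, T / r ^ i % r * r ^ i := by
  intro m
  induction m with
  | zero => simp [Nat.mod_one]
  | succ m ih =>
    rw [pow_succ, Nat.mod_mul, Finset.sum_range_succ, ← ih]
    ring

open Finset in
/-- In the proposed generic SIMD Montgomery reduction, the
precomputation followed by two partial reduction steps yields a value
congruent to `REDC(T)`: `R·T⁽ⁿ⁾ ≡ T (mod p)`. -/
theorem proposed_generic_redc_congruence (p ω n : ℕ)
    (hp_odd : Odd p) (hp : 1 < p) (hω : 1 ≤ ω) (hn : 2 < n)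
    (r R : ℕ) (hr : r = 2 ^ ω) (hR : R = 2 ^ (ω * n))
    (rinv : ℕ) (hrinv : r * rinv ≡ 1 [MOD p])
    (p' : ℕ) (hp' : p' = (r * rinv - 1) / p)
    (T : ℕ) (Ti : ℕ → ℕ) (hTi : ∀ i, 1 ≤ i → i ≤ n - 2 → Ti i = T / r ^ (i - 1) % r)
    (M : ℕ → ℕ) (hM : ∀ i, 1 ≤ i → i ≤ n - 2 → r ^ (n - i - 1) * M i ≡ 1 [MOD p])
    (T2 T1 T0 : ℕ)
    (hT2 : T2 = T / r ^ (n - 2) + ∑ i ∈ Icc 1 (n - 2), Ti i * M i)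
    (hT1 : T1 = (T2 + ((T2 * p') % r) * p) / r)
    (hT0 : T0 = (T1 + ((T1 * p') % r) * p) / r) :
    R * T0 ≡ T [MOD p] := by
  have hr0 : 0 < r := by rw [hr]; positivity
  -- p' facts
  have hrinv1 : 1 ≤ r * rinv := by
    by_contra h
    have h0 : r * rinv = 0 := by omega
    have : (0 : ℕ) ≡ 1 [MOD p] := h0 ▸ hrinv
    have := this.symm
    rw [Nat.modEq_zero_iff_dvd] at this
    have := Nat.le_of_dvd one_pos this
    omega
  have hpd : p ∣ r * rinv - 1 := (Nat.modEq_iff_dvd' hrinv1).mp hrinv.symm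
  have hpp' : 1 + p * p' = r * rinv := by
    have := Nat.mul_div_cancel' hpd
    rw [hp']
    omega
  have key : ∀ t : ℕ, r ∣ t + t * p' % r * p := by
    intro t
    have h1 : (t + t * p' % r * p) ≡ (t + t * p' * p) [MOD r] :=
      (Nat.ModEq.refl t).add ((Nat.mod_modEq (t * p') r).mul_right p)
    have h2 : t + t * p' * p = t * rinv * r := by
      have : t + t * p' * p = t * (1 + p * p') := by ring
      rw [this, hpp']; ring
    rw [← Nat.modEq_zero_iff_dvd]
    calc t + t * p' % r * p ≡ t + t * p' * p [MOD r] := h1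
      _ = t * rinv * r := h2
      _ ≡ 0 [MOD r] := (Nat.modEq_zero_iff_dvd).mpr ⟨t * rinv, by ring⟩
  have e1 : r * T1 = T2 + T2 * p' % r * p := by
    rw [hT1, Nat.mul_div_cancel' (key T2)]
  have e0 : r * T0 = T1 + T1 * p' % r * p := by
    rw [hT0, Nat.mul_div_cancel' (key T1)]
  -- move to ZMod p
  rw [← ZMod.natCast_eq_natCast_iff]
  have c1 : (r : ZMod p) * (T1 : ZMod p) = (T2 : ZMod p) := by
    have := congrArg (Nat.cast : ℕ → ZMod p) e1
    push_cast at this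
    rw [ZMod.natCast_self, mul_zero, add_zero] at this
    exact this
  have c0 : (r : ZMod p) * (T0 : ZMod p) = (T1 : ZMod p) := by
    have := congrArg (Nat.cast : ℕ → ZMod p) e0
    push_cast at this
    rw [ZMod.natCast_self, mul_zero, add_zero] at this
    exact this
  have hRr : (R : ZMod p) = (r : ZMod p) ^ n := by
    rw [hR, hr]; push_cast [pow_mul]; ring
  push_cast
  rw [hRr]
  have hnsplit : (r : ZMod p) ^ n = (r : ZMod p) ^ (n - 2) * r * r := by
    rw [mul_assoc, ← pow_two, ← pow_add]
    congr 1
    omega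
  rw [hnsplit, mul_assoc, mul_assoc, c0, c1]
  -- now goal: r^(n-2) * T2 = T in ZMod p
  have hsum : (r : ZMod p) ^ (n - 2) * (T2 : ZMod p)
      = ((T / r ^ (n - 2) * r ^ (n - 2) + ∑ i ∈ Icc 1 (n - 2), T / r ^ (i - 1) % r * r ^ (i - 1) : ℕ) : ZMod p) := by
    rw [hT2]
    push_cast
    rw [mul_add, mul_sum]
    congr 1
    · ring
    · apply Finset.sum_congr rfl
      intro i hi
      rw [Finset.mem_Icc] at hi
      have hexp : (n - 2) = (i - 1) + (n - i - 1) := by omega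
      have hMi := (ZMod.natCast_eq_natCast_iff _ _ _).mpr (hM i hi.1 hi.2)
      push_cast at hMi
      rw [hTi i hi.1 hi.2, hexp, pow_add]
      push_cast
      calc ((r : ZMod p) ^ (i-1) * (r : ZMod p) ^ (n-i-1)) * ((T / r ^ (i - 1) % r : ℕ) * (M i : ZMod p))
          = ((T / r ^ (i - 1) % r : ℕ) : ZMod p) * (r : ZMod p) ^ (i-1) * ((r:ZMod p) ^ (n-i-1) * M i) := by ring
        _ = _ := by rw [hMi, mul_one]
  rw [hsum]
  congr 1
  have : (∑ i ∈ Icc 1 (n - 2), T / r ^ (i - 1) % r * r ^ (i - 1)) = T % r ^ (n - 2) := by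
    rw [digitSum r T (n - 2), ← Finset.Ico_add_one_right_eq_Icc, Finset.sum_Ico_eq_sum_range]
    apply Finset.sum_congr (by congr 1 <;> omega)
    intro i _
    have h1 : 1 + i - 1 = i := by omega
    rw [h1]
  rw [this, mul_comm]
  exact Nat.div_add_mod T (r ^ (n - 2))
end

section
/- Let p be an odd natural number with p > 1, let ω ≥ 1 and n > 2 with n − 1 ≤ 2^ω, set r = 2^ω and R = 2^{ωn}, let r⁻¹ satisfy r·r⁻¹ ≡ 1 (mod p), and let p' = (r·r⁻¹ − 1)/p. Let T be a natural number with T < p·R, let T_i = ⌊T/r^{i−1}⌋ mod r for 1 ≤ i ≤ n−2, and let M_i be natural numbers with M_i < p. Define T^{(n−2)} = ⌊T/r^{n−2}⌋ + Σ_{i=1}^{n−2} T_i·M_i, T^{(n−1)} = (T^{(n−2)} + ((T^{(n−2)}·p') mod r)·p)/r, and T^{(n)} = (T^{(n−1)} + ((T^{(n−1)}·p') mod r)·p)/r. Then T^{(n−2)} < r²·p + (n−2)·r·p, T^{(n−1)} < 2·r·p, and T^{(n)} < 3p. -/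
open Finset in
/-- Bounds in the proposed generic SIMD Montgomery reduction:
`T⁽ⁿ⁻²⁾ < r²·p + (n−2)·r·p`, `T⁽ⁿ⁻¹⁾ < 2·r·p`, and `T⁽ⁿ⁾ < 3p`. -/
theorem proposed_generic_redc_bounds (p ω n : ℕ)
    (hp_odd : Odd p) (hp : 1 < p) (hω : 1 ≤ ω) (hn : 2 < n)
    (hnr : n - 1 ≤ 2 ^ ω)
    (r R : ℕ) (hr : r = 2 ^ ω) (hR : R = 2 ^ (ω * n))
    (rinv : ℕ) (hrinv : r * rinv ≡ 1 [MOD p])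
    (p' : ℕ) (hp' : p' = (r * rinv - 1) / p)
    (T : ℕ) (hT : T < p * R)
    (Ti : ℕ → ℕ) (hTi : ∀ i, 1 ≤ i → i ≤ n - 2 → Ti i = T / r ^ (i - 1) % r)
    (M : ℕ → ℕ) (hM : ∀ i, 1 ≤ i → i ≤ n - 2 → M i < p)
    (T2 T1 T0 : ℕ)
    (hT2 : T2 = T / r ^ (n - 2) + ∑ i ∈ Icc 1 (n - 2), Ti i * M i)
    (hT1 : T1 = (T2 + ((T2 * p') % r) * p) / r)
    (hT0 : T0 = (T1 + ((T1 * p') % r) * p) / r) :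
    T2 < r ^ 2 * p + (n - 2) * r * p ∧ T1 < 2 * r * p ∧ T0 < 3 * p := by
  have hrpos : 0 < r := by rw [hr]; positivity
  have hr2 : 2 ≤ r := by
    rw [hr]
    calc 2 = 2 ^ 1 := by norm_num
    _ ≤ 2 ^ ω := Nat.pow_le_pow_right (by norm_num) hω
  have hppos : 0 < p := by omega
  -- m := n - 2
  obtain ⟨m, hm⟩ : ∃ m, n - 2 = m := ⟨n - 2, rfl⟩
  have hm1 : 1 ≤ m := by omega
  have hmn : n = m + 2 := by omega
  have hmr : m + 1 ≤ r := by
    rw [hr]; omega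
  -- bound on the high part
  have hdiv : T / r ^ m < p * r ^ 2 := by
    apply Nat.div_lt_of_lt_mul
    calc T < p * R := hT
      _ = r ^ m * (p * r ^ 2) := by rw [hR, hr, ← pow_mul, hmn]; ring
  -- bound on the sum
  have hsum : ∑ i ∈ Icc 1 (n - 2), Ti i * M i ≤ m * (r * p) := by
    calc ∑ i ∈ Icc 1 (n - 2), Ti i * M i
        ≤ ∑ i ∈ Icc 1 (n - 2), r * p := by
          apply Finset.sum_le_sum
          intro i hi
          simp only [Finset.mem_Icc] at hi
          have h1 : Ti i ≤ r := by
            rw [hTi i hi.1 hi.2]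
            exact le_of_lt (Nat.mod_lt _ hrpos)
          exact Nat.mul_le_mul h1 (le_of_lt (hM i hi.1 hi.2))
      _ = m * (r * p) := by
          rw [Finset.sum_const, Nat.card_Icc, smul_eq_mul]
          have e : n - 2 + 1 - 1 = m := by omega
          rw [e]
  have hb2 : T2 < r ^ 2 * p + m * r * p := by
    rw [hm] at hsum
    rw [hT2, hm]
    have e2 : m * r * p = m * (r * p) := by ring
    have e3 : r ^ 2 * p = p * r ^ 2 := by ring
    linarith [hdiv, hsum]
  have key : m * (r * p) + r * p ≤ r * (r * p) := by
    have h := Nat.mul_le_mul_right (r * p) hmr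
    linarith [h, (add_mul m 1 (r * p)).symm ▸ h]
  have hT1b : T1 < 2 * r * p := by
    have ha : T2 * p' % r < r := Nat.mod_lt _ hrpos
    have h1 : T2 * p' % r * p < r * p := (Nat.mul_lt_mul_right hppos).mpr ha
    rw [hT1]
    apply Nat.div_lt_of_lt_mul
    have e : 2 * r * p * r = r ^ 2 * p + r * (r * p) := by ring
    have e2 : m * r * p = m * (r * p) := by ring
    linarith [hb2, h1, key]
  refine ⟨by rw [hm]; exact hb2, hT1b, ?_⟩
  have hb : T1 * p' % r < r := Nat.mod_lt _ hrpos
  have h1 : T1 * p' % r * p < r * p := (Nat.mul_lt_mul_right hppos).mpr hb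
  rw [hT0]
  apply Nat.div_lt_of_lt_mul
  have e : 3 * p * r = 2 * r * p + r * p := by ring
  linarith [hT1b, h1]
end

section
/- Let p be an odd natural number with p > 1, let ω ≥ 1 and n > 2 with n − 1 ≤ 2^ω, set r = 2^ω and R = 2^{ωn}, let r⁻¹ satisfy r·r⁻¹ ≡ 1 (mod p), and let p' = (r·r⁻¹ − 1)/p. Let T be a natural number with T < p·R, let T_i = ⌊T/r^{i−1}⌋ mod r for 1 ≤ i ≤ n−2, and let M_i be natural numbers with M_i < p and r^{n−i−1}·M_i ≡ 1 (mod p). Define T^{(n−2)} = ⌊T/r^{n−2}⌋ + Σ_{i=1}^{n−2} T_i·M_i, T^{(n−1)} = (T^{(n−2)} + ((T^{(n−2)}·p') mod r)·p)/r, and T^{(n)} = (T^{(n−1)} + ((T^{(n−1)}·p') mod r)·p)/r. Then T^{(n)} mod p (equivalently, the value obtained from T^{(n)} by at most two conditional subtractions of p) is the unique natural number y < p satisfying R·y ≡ T (mod p), i.e., it equals REDC(T) = T·R⁻¹ mod p. -/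
lemma digit_sum_aux (r T : ℕ) : ∀ k, T % r ^ k = ∑ i ∈ Finset.range k, (T / r ^ i % r) * r ^ i := by
  intro k
  induction k with
  | zero => simp [Nat.mod_one]
  | succ k ih =>
    rw [Nat.mod_pow_succ, Finset.sum_range_succ, ih, mul_comm]

open Finset in
/-- Full correctness of the proposed generic SIMD Montgomery
reduction: `T⁽ⁿ⁾ mod p` (the value after at most two conditional
subtractions of `p`) is the unique `y < p` with `R·y ≡ T (mod p)`,
i.e. it equals `REDC(T) = T·R⁻¹ mod p`. -/
theorem proposed_generic_redc_correct (p ω n : ℕ)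
    (hp_odd : Odd p) (hp : 1 < p) (hω : 1 ≤ ω) (hn : 2 < n)
    (hnr : n - 1 ≤ 2 ^ ω)
    (r R : ℕ) (hr : r = 2 ^ ω) (hR : R = 2 ^ (ω * n))
    (rinv : ℕ) (hrinv : r * rinv ≡ 1 [MOD p])
    (p' : ℕ) (hp' : p' = (r * rinv - 1) / p)
    (T : ℕ) (hT : T < p * R)
    (Ti : ℕ → ℕ) (hTi : ∀ i, 1 ≤ i → i ≤ n - 2 → Ti i = T / r ^ (i - 1) % r)
    (M : ℕ → ℕ) (hM : ∀ i, 1 ≤ i → i ≤ n - 2 → M i < p ∧ r ^ (n - i - 1) * M i ≡ 1 [MOD p])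
    (T2 T1 T0 : ℕ)
    (hT2 : T2 = T / r ^ (n - 2) + ∑ i ∈ Icc 1 (n - 2), Ti i * M i)
    (hT1 : T1 = (T2 + ((T2 * p') % r) * p) / r)
    (hT0 : T0 = (T1 + ((T1 * p') % r) * p) / r) :
    T0 % p < p ∧ R * (T0 % p) ≡ T [MOD p] ∧
      ∀ y, y < p → R * y ≡ T [MOD p] → y = T0 % p := by
  have hp0 : 0 < p := by omega
  have hrpos : 0 < r := by rw [hr]; positivity
  have hrinv1 : 1 ≤ r * rinv := by
    rcases Nat.eq_zero_or_pos (r * rinv) with h | h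
    · exfalso
      have h2 := hrinv
      rw [h] at h2
      have h3 : 0 % p = 1 % p := h2
      rw [Nat.zero_mod, Nat.mod_eq_of_lt hp] at h3
      omega
    · omega
  have hdvd : p ∣ r * rinv - 1 := (Nat.modEq_iff_dvd' hrinv1).mp hrinv.symm
  have hpp' : p * p' + 1 = r * rinv := by
    rw [hp', Nat.mul_div_cancel' hdvd]; omega
  -- key divisibility for Montgomery steps
  have step_dvd : ∀ x : ℕ, r ∣ x + ((x * p') % r) * p := by
    intro x
    have h1 : x + ((x * p') % r) * p ≡ x + (x * p') * p [MOD r] :=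
      Nat.ModEq.add_left x ((Nat.mod_modEq (x * p') r).mul_right p)
    have h2 : x + (x * p') * p = x * (r * rinv) := by rw [← hpp']; ring
    have h3 : x + ((x * p') % r) * p ≡ 0 [MOD r] := by
      calc x + ((x * p') % r) * p ≡ x * (r * rinv) [MOD r] := h2 ▸ h1
        _ ≡ 0 [MOD r] := Nat.modEq_zero_iff_dvd.mpr ⟨x * rinv, by ring⟩
    exact Nat.modEq_zero_iff_dvd.mp h3
  have hstep1 : r * T1 = T2 + ((T2 * p') % r) * p := by
    rw [hT1, Nat.mul_div_cancel' (step_dvd T2)]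
  have hstep0 : r * T0 = T1 + ((T1 * p') % r) * p := by
    rw [hT0, Nat.mul_div_cancel' (step_dvd T1)]
  have e1 : ((r : ZMod p)) * T1 = (T2 : ZMod p) := by
    have := congrArg (fun m : ℕ => (m : ZMod p)) hstep1
    push_cast [ZMod.natCast_self] at this
    simpa using this
  have e0 : ((r : ZMod p)) * T0 = (T1 : ZMod p) := by
    have := congrArg (fun m : ℕ => (m : ZMod p)) hstep0
    push_cast [ZMod.natCast_self] at this
    simpa using this
  have hu : (r : ZMod p) * (rinv : ZMod p) = 1 := by
    have := (ZMod.natCast_eq_natCast_iff _ _ _).mpr hrinv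
    push_cast at this
    simpa using this
  have cancel : ∀ a b : ZMod p, (r : ZMod p) * a = (r : ZMod p) * b → a = b := by
    intro a b h
    have := congrArg (fun z => (rinv : ZMod p) * z) h
    simp only [← mul_assoc, mul_comm (rinv : ZMod p) (r : ZMod p), hu, one_mul] at this
    exact this
  -- r^(n-1) * T2 = r * T in ZMod p
  have e2 : (r : ZMod p) ^ (n - 1) * T2 = (r : ZMod p) * T := by
    have hdigit : T % r ^ (n - 2) = ∑ i ∈ Icc 1 (n - 2), Ti i * r ^ (i - 1) := by
      rw [digit_sum_aux r T (n - 2),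
        show Finset.Icc 1 (n - 2) = Finset.Ico 1 (n - 2 + 1) by rw [Finset.Ico_add_one_right_eq_Icc],
        Finset.sum_Ico_eq_sum_range]
      rw [show n - 2 + 1 - 1 = n - 2 by omega]
      refine Finset.sum_congr rfl fun i hi => ?_
      simp only [Finset.mem_range] at hi
      rw [hTi (1 + i) (by omega) (by omega)]
      rw [show 1 + i - 1 = i by omega]
    have hpt : ∀ i ∈ Icc 1 (n - 2), (r : ZMod p) ^ (n - 1) * ((Ti i : ZMod p) * M i)
        = (Ti i : ZMod p) * (r : ZMod p) ^ i := by
      intro i hi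
      simp only [Finset.mem_Icc] at hi
      have hMi := ((ZMod.natCast_eq_natCast_iff _ _ _).mpr (hM i hi.1 hi.2).2)
      push_cast at hMi
      have hsplit : n - 1 = (n - i - 1) + i := by omega
      rw [hsplit, pow_add]
      calc (r : ZMod p) ^ (n - i - 1) * (r : ZMod p) ^ i * ((Ti i : ZMod p) * M i)
          = ((r : ZMod p) ^ (n - i - 1) * M i) * ((Ti i : ZMod p) * (r : ZMod p) ^ i) := by ring
        _ = (Ti i : ZMod p) * (r : ZMod p) ^ i := by rw [hMi, one_mul]
    have hsum2 : ∑ i ∈ Icc 1 (n - 2), (Ti i : ZMod p) * (r : ZMod p) ^ i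
        = (r : ZMod p) * ((T % r ^ (n - 2) : ℕ) : ZMod p) := by
      rw [hdigit]
      push_cast
      rw [Finset.mul_sum]
      refine Finset.sum_congr rfl fun i hi => ?_
      simp only [Finset.mem_Icc] at hi
      have hpow : (r : ZMod p) ^ i = (r : ZMod p) * (r : ZMod p) ^ (i - 1) := by
        rw [← pow_succ']
        congr 1
        omega
      rw [hpow]; ring
    have hTsplit : (T : ZMod p) = (r : ZMod p) ^ (n - 2) * ((T / r ^ (n - 2) : ℕ) : ZMod p)
        + ((T % r ^ (n - 2) : ℕ) : ZMod p) := by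
      have h := Nat.div_add_mod T (r ^ (n - 2))
      have := congrArg (fun m : ℕ => (m : ZMod p)) h
      push_cast at this
      rw [← this]
    rw [hT2]
    push_cast
    rw [mul_add, Finset.mul_sum]
    rw [Finset.sum_congr rfl hpt, hsum2, hTsplit]
    have hpow2 : (r : ZMod p) ^ (n - 1) = (r : ZMod p) * (r : ZMod p) ^ (n - 2) := by
      rw [← pow_succ']
      congr 1
      omega
    rw [hpow2]; ring
  -- r^(n-2) * T2 = T
  have e2' : (r : ZMod p) ^ (n - 2) * T2 = (T : ZMod p) := by
    refine cancel _ _ ?_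
    rw [← mul_assoc, ← pow_succ', show n - 2 + 1 = n - 1 by omega, e2]
  have hRr : (R : ZMod p) = (r : ZMod p) ^ n := by
    rw [hR, hr]; push_cast; rw [← pow_mul]
  have emain : (R : ZMod p) * T0 = (T : ZMod p) := by
    rw [hRr]
    have h1 : (r : ZMod p) ^ n = (r : ZMod p) ^ (n - 2) * (r : ZMod p) * (r : ZMod p) := by
      rw [← pow_succ, ← pow_succ]
      congr 1
      omega
    calc (r : ZMod p) ^ n * T0
        = (r : ZMod p) ^ (n - 2) * ((r : ZMod p) * ((r : ZMod p) * T0)) := by rw [h1]; ring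
      _ = (r : ZMod p) ^ (n - 2) * ((r : ZMod p) * T1) := by rw [e0]
      _ = (r : ZMod p) ^ (n - 2) * T2 := by rw [e1]
      _ = (T : ZMod p) := e2'
  refine ⟨Nat.mod_lt _ hp0, ?_, ?_⟩
  · rw [← ZMod.natCast_eq_natCast_iff]
    push_cast [ZMod.natCast_mod]
    exact emain
  · intro y hy hRy
    have hRy' : (R : ZMod p) * y = (T : ZMod p) := by
      have := (ZMod.natCast_eq_natCast_iff _ _ _).mpr hRy
      push_cast at this
      exact this
    -- R is a unit: cancel r n times
    have hcanc : ∀ k, ∀ a b : ZMod p, (r : ZMod p) ^ k * a = (r : ZMod p) ^ k * b → a = b := by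
      intro k
      induction k with
      | zero => intro a b h; simpa using h
      | succ k ih =>
        intro a b h
        rw [pow_succ] at h
        refine ih _ _ (cancel _ _ ?_)
        calc (r : ZMod p) * ((r : ZMod p) ^ k * a)
            = (r : ZMod p) ^ k * (r : ZMod p) * a := by ring
          _ = (r : ZMod p) ^ k * (r : ZMod p) * b := h
          _ = (r : ZMod p) * ((r : ZMod p) ^ k * b) := by ring
    have heq : (y : ZMod p) = ((T0 % p : ℕ) : ZMod p) := by
      refine hcanc n _ _ ?_
      rw [← hRr, hRy']
      rw [ZMod.natCast_mod, emain]
    have := congrArg ZMod.val heq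
    rwa [ZMod.val_cast_of_lt hy, ZMod.val_cast_of_lt (Nat.mod_lt _ hp0)] at this
end

section
/- Let ℓ, ω, n, F be natural numbers with 1 ≤ ω ≤ ℓ, F ≥ 1, ℓ < ⌈n/2⌉·ω < ℓ + ω, and let p = 2^ℓ·F − 1, assumed to satisfy p > 1. For a natural number T, define t = ((T·F) mod 2^ω)·2^ℓ and Q = (T + t) mod 2^{⌈n/2⌉·ω}. Then 2^{⌈n/2⌉·ω} divides T + p·Q. -/
/-- In the half-width partial reduction step for
`p = 2^ℓ·F − 1`, with `t = ((T·F) mod 2^ω)·2^ℓ` and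
`Q = (T + t) mod 2^(⌈n/2⌉·ω)`, the radix `2^(⌈n/2⌉·ω)` divides `T + p·Q`. -/
theorem half_width_step_divisible (ℓ ω n F : ℕ)
    (hω : 1 ≤ ω) (hωℓ : ω ≤ ℓ) (hF : 1 ≤ F)
    (h1 : ℓ < (n + 1) / 2 * ω) (h2 : (n + 1) / 2 * ω < ℓ + ω)
    (p : ℕ) (hp_def : p = 2 ^ ℓ * F - 1) (hp : 1 < p)
    (T : ℕ) (t Q : ℕ)
    (ht : t = ((T * F) % 2 ^ ω) * 2 ^ ℓ)
    (hQ : Q = (T + t) % 2 ^ ((n + 1) / 2 * ω)) :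
    2 ^ ((n + 1) / 2 * ω) ∣ T + p * Q := by
  set r := (n + 1) / 2 * ω with hrdef
  have hlr : ℓ ≤ r := le_of_lt h1
  obtain ⟨a, ha⟩ : ∃ a, r = ℓ + a := ⟨r - ℓ, (Nat.add_sub_cancel' hlr).symm⟩
  have haω : a ≤ ω := by omega
  have haℓ : a ≤ ℓ := le_trans haω hωℓ
  have h11 : 1 ≤ 2 ^ ℓ * F := Nat.one_le_iff_ne_zero.mpr (by positivity)
  rw [← Int.natCast_dvd_natCast]
  push_cast
  have hpZ : (p : ℤ) = 2 ^ ℓ * F - 1 := by rw [hp_def]; push_cast [h11]; ring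
  have htZ : (t : ℤ) = ((T * F : ℤ) % 2 ^ ω) * 2 ^ ℓ := by rw [ht]; push_cast; ring
  have hQZ : (Q : ℤ) = ((T : ℤ) + t) % 2 ^ r := by rw [hQ]; push_cast; ring
  have d1 : (2 : ℤ) ^ r ∣ ((T : ℤ) + t - Q) :=
    Int.dvd_self_sub_of_emod_eq hQZ.symm
  have dω : (2 : ℤ) ^ ω ∣ ((F : ℤ) * T - (T * F : ℤ) % 2 ^ ω) := by
    rw [mul_comm]
    exact Int.dvd_self_sub_of_emod_eq rfl
  have d2 : (2 : ℤ) ^ a ∣ ((F : ℤ) * (Q - (T + t)) + F * t + (F * T - (T * F : ℤ) % 2 ^ ω)) := by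
    refine dvd_add (dvd_add ?_ ?_) (dvd_trans (pow_dvd_pow 2 haω) dω)
    · have h' : (2 : ℤ) ^ a ∣ ((Q : ℤ) - (T + t)) := by
        have := (dvd_neg (α := ℤ)).mpr (dvd_trans (pow_dvd_pow 2 (show a ≤ r by omega)) d1)
        simpa [neg_sub] using this
      exact h'.mul_left _
    · rw [htZ]
      exact Dvd.dvd.mul_left (Dvd.dvd.mul_left (pow_dvd_pow 2 haℓ) _) _
  have e : (T : ℤ) + p * Q =
      ((T : ℤ) + t - Q) +
        2 ^ ℓ * ((F : ℤ) * (Q - (T + t)) + F * t + (F * T - (T * F : ℤ) % 2 ^ ω)) := by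
    rw [hpZ, htZ]; ring
  rw [e, ha, pow_add]
  exact dvd_add (by rw [← pow_add, ← ha]; exact d1) (mul_dvd_mul dvd_rfl d2)
end

section
/- Let ℓ, ω, n, F be natural numbers with 1 ≤ ω ≤ ℓ, F ≥ 1, ℓ < ⌈n/2⌉·ω < ℓ + ω, and let p = 2^ℓ·F − 1, assumed to satisfy p > 1. For a natural number T, set r = 2^{⌈n/2⌉·ω}, t = ((T·F) mod 2^ω)·2^ℓ, Q = (T + t) mod r, and T' = ⌊(T + 2^ℓ·Q·F)/r⌋. Then T' = (T + Q·p)/r and r·T' ≡ T (mod p); that is, T' is a partial Montgomery reduction of T by ⌈n/2⌉·ω bits: T' ≡ T·2^{−⌈n/2⌉·ω} (mod p). -/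
/-- The half-width partial reduction step for `p = 2^ℓ·F − 1`
computes a partial Montgomery reduction of `T` by `⌈n/2⌉·ω` bits:
`T' = ⌊(T + 2^ℓ·Q·F)/r⌋ = (T + Q·p)/r` and `r·T' ≡ T (mod p)`. -/
theorem half_width_step_correct (ℓ ω n F : ℕ)
    (hω : 1 ≤ ω) (hωℓ : ω ≤ ℓ) (hF : 1 ≤ F)
    (h1 : ℓ < (n + 1) / 2 * ω) (h2 : (n + 1) / 2 * ω < ℓ + ω)
    (p : ℕ) (hp_def : p = 2 ^ ℓ * F - 1) (hp : 1 < p)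
    (T : ℕ) (r t Q T' : ℕ)
    (hr : r = 2 ^ ((n + 1) / 2 * ω))
    (ht : t = ((T * F) % 2 ^ ω) * 2 ^ ℓ)
    (hQ : Q = (T + t) % r)
    (hT' : T' = (T + 2 ^ ℓ * Q * F) / r) :
    T' = (T + Q * p) / r ∧ r * T' ≡ T [MOD p] := by
  set m := (n + 1) / 2 * ω with hm
  set s := m - ℓ with hs
  have hms : m = ℓ + s := by omega
  have hsω : s ≤ ω := by omega
  have hsℓ : s ≤ ℓ := le_trans hsω hωℓ
  have hp1 : 2 ^ ℓ * F = p + 1 := by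
    have : 1 ≤ 2 ^ ℓ * F := Nat.one_le_iff_ne_zero.mpr (by positivity)
    omega
  have hrpos : 0 < r := by rw [hr]; positivity
  -- key congruence: (T+t)*F ≡ T*F % 2^ω [MOD 2^s]
  have hsdvdω : (2:ℕ) ^ s ∣ 2 ^ ω := pow_dvd_pow 2 hsω
  have hsdvdℓ : (2:ℕ) ^ s ∣ 2 ^ ℓ := pow_dvd_pow 2 hsℓ
  have key1 : (T + t) * F ≡ T * F % 2 ^ ω [MOD 2 ^ s] := by
    have h1' : t * F ≡ 0 [MOD 2 ^ s] := by
      rw [Nat.modEq_zero_iff_dvd, ht]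
      exact Dvd.dvd.mul_right (Dvd.dvd.mul_left hsdvdℓ _) F
    have h2' : T * F ≡ T * F % 2 ^ ω [MOD 2 ^ s] :=
      (Nat.ModEq.symm (Nat.mod_modEq _ _)).of_dvd hsdvdω
    calc (T + t) * F = T * F + t * F := by ring
      _ ≡ T * F % 2 ^ ω + 0 [MOD 2 ^ s] := h2'.add h1'
      _ = T * F % 2 ^ ω := by ring
  -- multiply by 2^ℓ
  have key2 : (T + t) * 2 ^ ℓ * F ≡ t [MOD r] := by
    have := key1.mul_left' (c := 2 ^ ℓ)
    rw [hr, hms, pow_add]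
    calc (T + t) * 2 ^ ℓ * F = 2 ^ ℓ * ((T + t) * F) := by ring
      _ ≡ 2 ^ ℓ * (T * F % 2 ^ ω) [MOD 2 ^ ℓ * 2 ^ s] := this
      _ = t := by rw [ht]; ring
  -- r ∣ T + Q * p
  have hQr : Q < r := by rw [hQ]; exact Nat.mod_lt _ hrpos
  have hQcong : Q ≡ T + t [MOD r] := by rw [hQ]; exact Nat.mod_modEq _ _
  have key3 : T + Q * p ≡ 0 [MOD r] := by
    have h3 : T + (T + t) * p + t = (T + t) * 2 ^ ℓ * F := by
      have e : (T + t) * 2 ^ ℓ * F = (T + t) * (2 ^ ℓ * F) := by ring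
      rw [e, hp1]; ring
    have h4 : T + (T + t) * p + t ≡ 0 + t [MOD r] := by
      rw [h3, zero_add]; exact key2
    have h5 : T + (T + t) * p ≡ 0 [MOD r] := h4.add_right_cancel' t
    calc T + Q * p ≡ T + (T + t) * p [MOD r] :=
          Nat.ModEq.add_left T (hQcong.mul_right p)
      _ ≡ 0 [MOD r] := h5
  have hdvd : r ∣ T + Q * p := (Nat.modEq_zero_iff_dvd).mp key3
  obtain ⟨k, hk⟩ := hdvd
  have hTQ : T + 2 ^ ℓ * Q * F = r * k + Q := by
    have : 2 ^ ℓ * Q * F = Q * (p + 1) := by rw [← hp1]; ring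
    rw [this, mul_add, mul_one]; omega
  have hT'k : T' = k := by
    rw [hT', hTQ, Nat.mul_add_div hrpos, Nat.div_eq_of_lt hQr, add_zero]
  constructor
  · rw [hT'k, hk, Nat.mul_div_cancel_left _ hrpos]
  · calc r * T' = T + Q * p := by rw [hT'k, hk]
      _ ≡ T + Q * 0 [MOD p] := Nat.ModEq.add_left T ((Nat.modEq_zero_iff_dvd.mpr dvd_rfl).mul_left Q)
      _ = T := by ring
end

section
/- Let ℓ, ω, F be natural numbers with 1 ≤ ω ≤ ℓ and F ≥ 1, let n be an even natural number with n > 0, suppose ℓ < (n/2)·ω < ℓ + ω, and let p = 2^ℓ·F − 1, assumed to satisfy p > 1. Set r = 2^{(n/2)·ω} and R = 2^{nω} (so R = r²), and let T be a natural number with T < p·R. Define T^{(0)} = T and, for i ∈ {1, 2}: t^{(i)} = ((T^{(i−1)}·F) mod 2^ω)·2^ℓ, Q^{(i)} = (T^{(i−1)} + t^{(i)}) mod r, and T^{(i)} = ⌊(T^{(i−1)} + 2^ℓ·Q^{(i)}·F)/r⌋. Then T^{(1)} < p·r + p and T^{(2)} < 2p, and R·T^{(2)} ≡ T (mod p); consequently,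 the value obtained from T^{(2)} by one conditional subtraction of p (i.e., T^{(2)} mod p) is the unique natural number y < p with R·y ≡ T (mod p), i.e., it equals the Montgomery reduction T·R⁻¹ mod p. -/
/-- Key step lemma: one partial reduction step satisfies `T' * r = T + Q * p`. -/
lemma redc_step_eq (ℓ ω F p r T t Q T' : ℕ)
    (hωℓ : ω ≤ ℓ) (hp1 : p + 1 = 2 ^ ℓ * F)
    (hrdvd : r ∣ 2 ^ (ℓ + ω)) (hr0 : 0 < r)
    (ht : t = ((T * F) % 2 ^ ω) * 2 ^ ℓ)
    (hQ : Q = (T + t) % r)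
    (hT' : T' = (T + 2 ^ ℓ * Q * F) / r) :
    T' * r = T + Q * p := by
  have hQlt : Q < r := hQ ▸ Nat.mod_lt _ hr0
  set a := T * F % 2 ^ ω with ha
  set q := T * F / 2 ^ ω with hq
  have hdm : 2 ^ ω * q + a = T * F := Nat.div_add_mod _ _
  have hid : T + (T + t) * p = 2 ^ ℓ * (2 ^ ω * q + a * (2 ^ ℓ * F)) := by
    subst ht
    zify at hdm hp1 ⊢
    linear_combination ((T : ℤ) + a * 2 ^ ℓ) * hp1 - (2 : ℤ) ^ ℓ * hdm
  have hdvd : 2 ^ (ℓ + ω) ∣ T + (T + t) * p := by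
    rw [hid, pow_add]
    refine mul_dvd_mul_left _ (dvd_add ⟨q, rfl⟩ ?_)
    exact Dvd.dvd.mul_left (Dvd.dvd.mul_right (pow_dvd_pow 2 hωℓ) F) a
  have hrd : r ∣ T + (T + t) * p := dvd_trans hrdvd hdvd
  have hQp : r ∣ T + Q * p := by
    have hmeq : (T + Q * p) % r = (T + (T + t) * p) % r :=
      Nat.ModEq.add_left T (Nat.ModEq.mul_right p (hQ ▸ (Nat.mod_modEq (T + t) r)))
    obtain ⟨c, hc⟩ := hrd
    have h0 : (T + (T + t) * p) % r = 0 := by rw [hc]; exact Nat.mul_mod_right r c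
    exact Nat.dvd_of_mod_eq_zero (by omega)
  obtain ⟨k, hk⟩ := hQp
  have h3 : 2 ^ ℓ * Q * F = Q * p + Q := by
    have : 2 ^ ℓ * Q * F = Q * (2 ^ ℓ * F) := by ring
    rw [this, ← hp1]; ring
  have h4 : T + 2 ^ ℓ * Q * F = r * k + Q := by
    rw [h3, ← Nat.add_assoc, hk]
  have hT'k : T' = k := by
    rw [hT', h4, Nat.mul_add_div hr0, Nat.div_eq_of_lt hQlt, Nat.add_zero]
  rw [hT'k, hk, Nat.mul_comm]

/-- Full correctness of the proposed Montgomery reduction for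
`p = 2^ℓ·F − 1` with an even number of limbs `n`: after two half-width
partial reduction steps, `T⁽¹⁾ < p·r + p`, `T⁽²⁾ < 2p`,
`R·T⁽²⁾ ≡ T (mod p)`, and `T⁽²⁾ mod p` (the value after one conditional
subtraction of `p`) is the unique `y < p` with `R·y ≡ T (mod p)`. -/
theorem proposed_specific_redc_correct (ℓ ω F n : ℕ)
    (hω : 1 ≤ ω) (hωℓ : ω ≤ ℓ) (hF : 1 ≤ F)
    (hn_even : Even n) (hn_pos : 0 < n)
    (h1 : ℓ < n / 2 * ω) (h2 : n / 2 * ω < ℓ + ω)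
    (p : ℕ) (hp_def : p = 2 ^ ℓ * F - 1) (hp : 1 < p)
    (r R : ℕ) (hr : r = 2 ^ (n / 2 * ω)) (hR : R = 2 ^ (n * ω))
    (T : ℕ) (hT : T < p * R)
    (t1 Q1 T1 t2 Q2 T2 : ℕ)
    (ht1 : t1 = ((T * F) % 2 ^ ω) * 2 ^ ℓ)
    (hQ1 : Q1 = (T + t1) % r)
    (hT1 : T1 = (T + 2 ^ ℓ * Q1 * F) / r)
    (ht2 : t2 = ((T1 * F) % 2 ^ ω) * 2 ^ ℓ)
    (hQ2 : Q2 = (T1 + t2) % r)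
    (hT2 : T2 = (T1 + 2 ^ ℓ * Q2 * F) / r) :
    T1 < p * r + p ∧ T2 < 2 * p ∧ R * T2 ≡ T [MOD p] ∧
      (T2 % p < p ∧ R * (T2 % p) ≡ T [MOD p] ∧
        ∀ y, y < p → R * y ≡ T [MOD p] → y = T2 % p) := by
  have hp0 : 0 < p := by omega
  have hpow : 1 ≤ 2 ^ ℓ * F := Nat.one_le_iff_ne_zero.mpr (by positivity)
  have hp1 : p + 1 = 2 ^ ℓ * F := by omega
  have hn2 : n / 2 + n / 2 = n := by
    obtain ⟨k, hk⟩ := hn_even; omega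
  have hRrr : R = r * r := by
    rw [hR, hr, ← pow_add]
    congr 1
    rw [← Nat.add_mul, hn2]
  have hr0 : 0 < r := by rw [hr]; positivity
  have hrdvd : r ∣ 2 ^ (ℓ + ω) := by rw [hr]; exact pow_dvd_pow 2 (by omega)
  have hQ1lt : Q1 < r := hQ1 ▸ Nat.mod_lt _ hr0
  have hQ2lt : Q2 < r := hQ2 ▸ Nat.mod_lt _ hr0
  have e1 : T1 * r = T + Q1 * p := redc_step_eq ℓ ω F p r T t1 Q1 T1 hωℓ hp1 hrdvd hr0 ht1 hQ1 hT1
  have e2 : T2 * r = T1 + Q2 * p := redc_step_eq ℓ ω F p r T1 t2 Q2 T2 hωℓ hp1 hrdvd hr0 ht2 hQ2 hT2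
  -- bound on T1
  have hb1 : T1 < p * r + p := by
    have hTlt : T < p * (r * r) := hRrr ▸ hT
    have h6 : Q1 * p + p ≤ r * p := by
      have h := Nat.mul_le_mul_right p (show Q1 + 1 ≤ r by omega)
      rw [Nat.add_mul, Nat.one_mul] at h
      exact h
    have hlt : T1 * r < (p * r + p) * r := by
      rw [e1]
      linarith [hTlt, h6]
    exact Nat.lt_of_mul_lt_mul_right hlt
  -- bound on T2
  have hb2 : T2 < 2 * p := by
    have h6 : Q2 * p + p ≤ r * p := by
      have h := Nat.mul_le_mul_right p (show Q2 + 1 ≤ r by omega)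
      rw [Nat.add_mul, Nat.one_mul] at h
      exact h
    have hlt : T2 * r < (2 * p) * r := by
      rw [e2]
      linarith [hb1, h6]
    exact Nat.lt_of_mul_lt_mul_right hlt
  -- congruence
  have c1 : T1 * r ≡ T [MOD p] := by
    rw [e1]
    calc T + Q1 * p ≡ T + 0 [MOD p] :=
          Nat.ModEq.add_left T ((Nat.modEq_zero_iff_dvd).mpr (dvd_mul_left p Q1))
      _ = T := by ring
  have c2 : R * T2 ≡ T [MOD p] := by
    have h5 : R * T2 = T1 * r + (Q2 * r) * p := by
      rw [hRrr]
      calc r * r * T2 = (T2 * r) * r := by ring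
        _ = (T1 + Q2 * p) * r := by rw [e2]
        _ = T1 * r + (Q2 * r) * p := by ring
    calc R * T2 = T1 * r + (Q2 * r) * p := h5
      _ ≡ T1 * r + 0 [MOD p] :=
          Nat.ModEq.add_left _ ((Nat.modEq_zero_iff_dvd).mpr (dvd_mul_left p (Q2 * r)))
      _ = T1 * r := by ring
      _ ≡ T [MOD p] := c1
  -- coprimality of R and p
  have hpodd : ¬ (2 ∣ p) := by
    intro h2p
    have : 2 ∣ p + 1 := by
      rw [hp1]
      exact Dvd.dvd.mul_right (dvd_pow_self 2 (by omega)) F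
    omega
  have hcop2 : Nat.Coprime 2 p := (Nat.prime_two.coprime_iff_not_dvd).mpr hpodd
  have hcopR : Nat.Coprime R p := by rw [hR]; exact hcop2.pow_left _
  have cmod : R * (T2 % p) ≡ T [MOD p] :=
    (Nat.ModEq.mul_left R (Nat.mod_modEq T2 p)).trans c2
  refine ⟨hb1, hb2, c2, Nat.mod_lt _ hp0, cmod, ?_⟩
  intro y hy hyT
  have hyc : R * y ≡ R * (T2 % p) [MOD p] := hyT.trans cmod.symm
  have hy2 : y ≡ T2 % p [MOD p] := Nat.ModEq.cancel_left_of_coprime hcopR.symm hyc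
  have heq : y % p = (T2 % p) % p := hy2
  rw [Nat.mod_eq_of_lt hy, Nat.mod_mod_of_dvd T2 (dvd_refl p)] at heq
  exact heq
end
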